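/- arXiv:1809.09237 — 2 statements merged into one kernel-verified Lean document; each statement's English description precedes it below -/
import Mathlib

section
/- Let 0 < δ < (1/3)√(2/π), suppose the outlier ratio p = |Ω|/m satisfies p < 1/2 − δ/(√(2/π) − δ), and suppose that (√(2/π) − δ)‖X‖_F ≤ (1/m)‖𝒜(X)‖₁ ≤ (√(2/π) + δ)‖X‖_F for every X ∈ ℝ^{n×n} of rank at most 2r, and (√(2/π) − δ)‖X‖_F ≤ (1/(m(1−p)))·Σ_{i∉Ω} |⟨A_i, X⟩| ≤ (√(2/π) + δ)‖X‖_F for every X of rank at most 2r. Then every global minimizer of f recovers the ground truth: if U ∈ ℝ^{n×r} satisfies f(U) ≤ f(U') for all U' ∈ ℝ^{n×r}, then UUᵀ = X⋆; moreover the set of global minimizers of f is exactly 𝒰 = {U⋆R : R ∈ O(r)}. -/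
open Matrix
open scoped BigOperators

/-- Frobenius norm of a real matrix. -/
noncomputable def frobNorm {α β : Type*} [Fintype α] [Fintype β] (A : Matrix α β ℝ) : ℝ :=
  Real.sqrt (∑ i, ∑ j, (A i j) ^ 2)

/-- ℓ₁-norm of a vector in `ℝ^m`. -/
noncomputable def l1Norm {m : ℕ} (v : Fin m → ℝ) : ℝ := ∑ i, |v i|

/-- The linear measurement operator `𝒜(X)ᵢ = ⟨Aᵢ, X⟩ = trace(Aᵢᵀ X)`. -/
noncomputable def measOp {α β : Type*} [Fintype α] [Fintype β] {m : ℕ}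
    (A : Fin m → Matrix α β ℝ) (X : Matrix α β ℝ) : Fin m → ℝ :=
  fun i => ∑ j, ∑ k, A i j k * X j k

/-- Euclidean norm on `β → ℝ`. -/
noncomputable def e2norm {β : Type*} [Fintype β] (v : β → ℝ) : ℝ :=
  Real.sqrt (∑ i, (v i) ^ 2)

/-- The `k`-th largest singular value of a matrix. -/
noncomputable def singularValue {α β : Type*} [Fintype α] [Fintype β]
    (A : Matrix α β ℝ) (k : ℕ) : ℝ :=
  sSup {t : ℝ | ∃ S : Submodule ℝ (β → ℝ), Module.finrank ℝ S = k ∧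
    t = sInf {s : ℝ | ∃ x ∈ S, e2norm x = 1 ∧ s = e2norm (A.mulVec x)}}

/-- Distance from `W` to the orbit `{Wstar R : R ∈ O(r)}` in Frobenius norm. -/
noncomputable def distOrbit {α : Type*} [Fintype α] {r : ℕ}
    (Wstar W : Matrix α (Fin r) ℝ) : ℝ :=
  sInf {t : ℝ | ∃ R : Matrix (Fin r) (Fin r) ℝ, Rᵀ * R = 1 ∧ t = frobNorm (W - Wstar * R)}

/-- The ℓ₁-loss objective `f(U) = (1/m) ‖y − 𝒜(UUᵀ)‖₁` in the PSD case. -/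
noncomputable def objF {n r m : ℕ} (A : Fin m → Matrix (Fin n) (Fin n) ℝ)
    (y : Fin m → ℝ) (U : Matrix (Fin n) (Fin r) ℝ) : ℝ :=
  (1 / m) * l1Norm (fun i => y i - measOp A (U * Uᵀ) i)


lemma measOp_sub' {n m : ℕ} (A : Fin m → Matrix (Fin n) (Fin n) ℝ)
    (X Y : Matrix (Fin n) (Fin n) ℝ) (i : Fin m) :
    measOp A (X - Y) i = measOp A X i - measOp A Y i := by
  simp [measOp, Matrix.sub_apply, mul_sub, Finset.sum_sub_distrib]

lemma frobNorm_nonneg' {α β : Type*} [Fintype α] [Fintype β] (A : Matrix α β ℝ) :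
    0 ≤ frobNorm A := Real.sqrt_nonneg _

lemma frobNorm_eq_zero' {α β : Type*} [Fintype α] [Fintype β] (A : Matrix α β ℝ)
    (h : frobNorm A = 0) : A = 0 := by
  have hnn : (0:ℝ) ≤ ∑ i, ∑ j, (A i j) ^ 2 := by positivity
  have h2 : ∑ i, ∑ j, (A i j) ^ 2 = 0 := (Real.sqrt_eq_zero hnn).mp h
  ext i j
  have h3 := (Finset.sum_eq_zero_iff_of_nonneg (fun i _ => by positivity)).mp h2 i
    (Finset.mem_univ i)
  have h4 := (Finset.sum_eq_zero_iff_of_nonneg (fun j _ => by positivity)).mp h3 j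
    (Finset.mem_univ j)
  simpa using pow_eq_zero_iff two_ne_zero |>.mp h4

lemma matrix_rank_add_le {n : ℕ} (A B : Matrix (Fin n) (Fin n) ℝ) :
    (A + B).rank ≤ A.rank + B.rank := by
  have hr : LinearMap.range (A + B).mulVecLin ≤
      LinearMap.range A.mulVecLin ⊔ LinearMap.range B.mulVecLin := by
    rintro x ⟨v, rfl⟩
    rw [Matrix.mulVecLin_add]
    exact Submodule.add_mem_sup ⟨v, rfl⟩ ⟨v, rfl⟩
  calc (A + B).rank ≤ Module.finrank ℝ ↥(LinearMap.range A.mulVecLin ⊔ LinearMap.range B.mulVecLin) :=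
        Submodule.finrank_mono hr
    _ ≤ A.rank + B.rank := Submodule.finrank_add_le_finrank_add_finrank _ _

lemma factor_lemma {n r : ℕ} (Us U : Matrix (Fin n) (Fin r) ℝ)
    (hrank : (Us * Usᵀ).rank = r) (h : U * Uᵀ = Us * Usᵀ) :
    ∃ R : Matrix (Fin r) (Fin r) ℝ, Rᵀ * R = 1 ∧ U = Us * R := by
  set M := Usᵀ * Us with hMdef
  have hMrank : M.rank = r := by
    rw [hMdef, Matrix.rank_transpose_mul_self]
    rw [Matrix.rank_self_mul_transpose] at hrank
    exact hrank
  have hMunit : IsUnit M.det := by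
    have htop : LinearMap.range M.mulVecLin = ⊤ := by
      apply Submodule.eq_top_of_finrank_eq
      rw [show Module.finrank ℝ (LinearMap.range M.mulVecLin) = M.rank from rfl, hMrank,
        Module.finrank_fin_fun]
    have hsurj : Function.Surjective M.mulVec := by
      intro x
      have : x ∈ LinearMap.range M.mulVecLin := htop ▸ Submodule.mem_top
      obtain ⟨v, hv⟩ := this
      exact ⟨v, hv⟩
    exact (Matrix.isUnit_iff_isUnit_det M).mp (Matrix.mulVec_surjective_iff_isUnit.mp hsurj)
  have hMM : M⁻¹ * M = 1 := Matrix.nonsing_inv_mul M hMunit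
  have hMM' : M * M⁻¹ = 1 := Matrix.mul_nonsing_inv M hMunit
  have hMt : Mᵀ = M := by rw [hMdef, Matrix.transpose_mul, Matrix.transpose_transpose]
  have hMit : (M⁻¹)ᵀ = M⁻¹ := by rw [Matrix.transpose_nonsing_inv, hMt]
  have h' : ∀ (k : ℕ) (W : Matrix (Fin n) (Fin k) ℝ),
      U * (Uᵀ * W) = Us * (Usᵀ * W) := by
    intro k W; rw [← Matrix.mul_assoc, ← Matrix.mul_assoc, h]
  have hM2 : ∀ (k : ℕ) (W : Matrix (Fin r) (Fin k) ℝ),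
      Usᵀ * (Us * W) = M * W := by
    intro k W; rw [← Matrix.mul_assoc]
  have hM3 : ∀ (k : ℕ) (W : Matrix (Fin r) (Fin k) ℝ),
      M⁻¹ * (M * W) = W := by
    intro k W; rw [← Matrix.mul_assoc, hMM, Matrix.one_mul]
  have hM4 : ∀ (k : ℕ) (W : Matrix (Fin r) (Fin k) ℝ),
      M * (M⁻¹ * W) = W := by
    intro k W; rw [← Matrix.mul_assoc, hMM', Matrix.one_mul]
  set R := M⁻¹ * (Usᵀ * U) with hRdef
  have hRt : Rᵀ = Uᵀ * Us * M⁻¹ := by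
    rw [hRdef, Matrix.transpose_mul, Matrix.transpose_mul, hMit, Matrix.transpose_transpose,
      Matrix.mul_assoc]
  have hRRt : R * Rᵀ = 1 := by
    rw [hRdef, hRt]
    simp only [Matrix.mul_assoc]
    rw [h' r (Us * M⁻¹), hM2, hM2, hM3, hMM']
  have hV : (Us * R - U) * (Us * R - U)ᵀ = 0 := by
    have e1 : Us * R * Uᵀ = Us * Usᵀ := by
      rw [hRdef]
      simp only [Matrix.mul_assoc]
      rw [show Usᵀ * (U * Uᵀ) = Usᵀ * (Us * Usᵀ) by rw [h], hM2, hM3]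
    have e2 : U * Rᵀ * Usᵀ = Us * Usᵀ := by
      have := congrArg Matrix.transpose e1
      simpa [Matrix.transpose_mul, Matrix.mul_assoc] using this
    have e3 : Us * R * (Us * R)ᵀ = Us * Usᵀ := by
      rw [show (Us * R)ᵀ = Rᵀ * Usᵀ from Matrix.transpose_mul _ _, ← Matrix.mul_assoc,
        Matrix.mul_assoc (Us * R) Rᵀ Usᵀ]
      rw [show Us * R * (Rᵀ * Usᵀ) = Us * (R * Rᵀ) * Usᵀ by
        simp only [Matrix.mul_assoc], hRRt, Matrix.mul_one]
    rw [Matrix.transpose_sub, Matrix.sub_mul, Matrix.mul_sub, Matrix.mul_sub,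
      Matrix.transpose_mul]
    rw [show Us * R * (Rᵀ * Usᵀ) = Us * Usᵀ by
      have := e3; rwa [Matrix.transpose_mul] at this]
    rw [show Us * R * Uᵀ = Us * Usᵀ from e1]
    rw [show U * (Rᵀ * Usᵀ) = Us * Usᵀ by rw [← Matrix.mul_assoc]; exact e2]
    rw [h]
    simp
  have hV0 : Us * R - U = 0 := by
    set V := Us * R - U with hVdef
    ext i j
    have hdiag : (V * Vᵀ) i i = 0 := by rw [hV]; simp
    have hsum : ∑ k, V i k * V i k = 0 := by
      simpa [Matrix.mul_apply, Matrix.transpose_apply] using hdiag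
    have := (Finset.sum_eq_zero_iff_of_nonneg (fun k _ => mul_self_nonneg (V i k))).mp hsum j
      (Finset.mem_univ j)
    simpa [mul_self_eq_zero] using this
  refine ⟨R, mul_eq_one_comm.mp hRRt, ?_⟩
  have : Us * R = U := by
    have := sub_eq_zero.mp hV0
    exact this
  exact this.symm
set_option maxHeartbeats 1600000 in
/-- Proposition 3.3 (exact-recovery part): under the ℓ1/ℓ2-RIP of `𝒜` and `𝒜_{Ω^c}` and a
small enough outlier ratio, every global minimizer `U` of `f` satisfies `UUᵀ = X⋆`, and the
set of global minimizers is exactly the orbit `𝒰 = {U⋆R : R ∈ O(r)}`. -/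
theorem stmt7 {n r m : ℕ} (hm : 0 < m)
    (A : Fin m → Matrix (Fin n) (Fin n) ℝ)
    (Ustar : Matrix (Fin n) (Fin r) ℝ)
    (hrank : (Ustar * Ustarᵀ).rank = r)
    (sstar : Fin m → ℝ) (Ω : Finset (Fin m))
    (hsupp : ∀ i ∉ Ω, sstar i = 0)
    (δ : ℝ) (hδ0 : 0 < δ) (hδ1 : δ < 1 / 3 * Real.sqrt (2 / Real.pi))
    (hp : (Ω.card : ℝ) / m < 1 / 2 - δ / (Real.sqrt (2 / Real.pi) - δ))
    (hRIP : ∀ X : Matrix (Fin n) (Fin n) ℝ, X.rank ≤ 2 * r →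
      (Real.sqrt (2 / Real.pi) - δ) * frobNorm X ≤ (1 / m) * l1Norm (measOp A X) ∧
        (1 / m) * l1Norm (measOp A X) ≤ (Real.sqrt (2 / Real.pi) + δ) * frobNorm X)
    (hRIPc : ∀ X : Matrix (Fin n) (Fin n) ℝ, X.rank ≤ 2 * r →
      (Real.sqrt (2 / Real.pi) - δ) * frobNorm X ≤
          (1 / (m * (1 - (Ω.card : ℝ) / m))) * ∑ i ∈ Ωᶜ, |measOp A X i| ∧
        (1 / (m * (1 - (Ω.card : ℝ) / m))) * ∑ i ∈ Ωᶜ, |measOp A X i| ≤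
          (Real.sqrt (2 / Real.pi) + δ) * frobNorm X) :
    (∀ U : Matrix (Fin n) (Fin r) ℝ,
      (∀ U' : Matrix (Fin n) (Fin r) ℝ,
        objF A (fun i => measOp A (Ustar * Ustarᵀ) i + sstar i) U ≤
          objF A (fun i => measOp A (Ustar * Ustarᵀ) i + sstar i) U') →
      U * Uᵀ = Ustar * Ustarᵀ) ∧
    {U : Matrix (Fin n) (Fin r) ℝ |
        ∀ U' : Matrix (Fin n) (Fin r) ℝ,
          objF A (fun i => measOp A (Ustar * Ustarᵀ) i + sstar i) U ≤
            objF A (fun i => measOp A (Ustar * Ustarᵀ) i + sstar i) U'} =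
      {U : Matrix (Fin n) (Fin r) ℝ |
        ∃ R : Matrix (Fin r) (Fin r) ℝ, Rᵀ * R = 1 ∧ U = Ustar * R} := by
  set c := Real.sqrt (2 / Real.pi) with hcdef
  have hπ : 0 < Real.pi := Real.pi_pos
  have hc : 0 < c := Real.sqrt_pos.mpr (by positivity)
  have hcd : 0 < c - δ := by nlinarith
  have hm0 : (0:ℝ) < m := by exact_mod_cast hm
  have hp0 : (0:ℝ) ≤ (Ω.card : ℝ) / m := by positivity
  have hdpos : 0 < δ / (c - δ) := div_pos hδ0 hcd
  have hphalf : (Ω.card : ℝ) / m < 1 / 2 := by linarith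
  have hq : 0 < 1 - (Ω.card : ℝ) / m := by linarith
  have hmq : 0 < (m : ℝ) * (1 - (Ω.card : ℝ) / m) := mul_pos hm0 hq
  have hκ : 0 < 2 * (1 - (Ω.card : ℝ) / m) * (c - δ) - (c + δ) := by
    have h1 : δ / (c - δ) < 1 / 2 - (Ω.card : ℝ) / m := by linarith
    rw [div_lt_iff₀ hcd] at h1
    nlinarith
  have hfstar : objF A (fun i => measOp A (Ustar * Ustarᵀ) i + sstar i) Ustar
      = (1 / m) * ∑ i, |sstar i| := by
    simp only [objF, l1Norm]
    congr 1
    exact Finset.sum_congr rfl fun i _ => by ring_nf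
  have key : ∀ U : Matrix (Fin n) (Fin r) ℝ,
      objF A (fun i => measOp A (Ustar * Ustarᵀ) i + sstar i) Ustar +
        (2 * (1 - (Ω.card : ℝ) / m) * (c - δ) - (c + δ)) *
          frobNorm (U * Uᵀ - Ustar * Ustarᵀ) ≤
      objF A (fun i => measOp A (Ustar * Ustarᵀ) i + sstar i) U := by
    intro U
    set D := U * Uᵀ - Ustar * Ustarᵀ with hDdef
    set F := frobNorm D with hFdef
    have hrD : D.rank ≤ 2 * r := by
      have h1 : (U * Uᵀ).rank ≤ r :=
        le_trans (Matrix.rank_mul_le_left U Uᵀ)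
          (by simpa using Matrix.rank_le_card_width U)
      have h2 : (-(Ustar * Ustarᵀ)).rank ≤ r := by
        rw [show -(Ustar * Ustarᵀ) = (-Ustar) * Ustarᵀ by rw [Matrix.neg_mul]]
        exact le_trans (Matrix.rank_mul_le_left _ _)
          (by simpa using Matrix.rank_le_card_width (-Ustar))
      have : D = U * Uᵀ + -(Ustar * Ustarᵀ) := by rw [hDdef, sub_eq_add_neg]
      rw [this]
      calc (U * Uᵀ + -(Ustar * Ustarᵀ)).rank ≤ (U * Uᵀ).rank + (-(Ustar * Ustarᵀ)).rank :=
            matrix_rank_add_le _ _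
        _ ≤ 2 * r := by omega
    obtain ⟨_, hRt⟩ := hRIP D hrD
    obtain ⟨hLc, _⟩ := hRIPc D hrD
    have hT : l1Norm (measOp A D) ≤ (m : ℝ) * ((c + δ) * F) := by
      have h := mul_le_mul_of_nonneg_left hRt (le_of_lt hm0)
      calc l1Norm (measOp A D) = (m : ℝ) * ((1 / m) * l1Norm (measOp A D)) := by
            field_simp
        _ ≤ (m : ℝ) * ((c + δ) * F) := h
    have hS : (m : ℝ) * (1 - (Ω.card : ℝ) / m) * ((c - δ) * F)
        ≤ ∑ i ∈ Ωᶜ, |measOp A D i| := by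
      have h := mul_le_mul_of_nonneg_left hLc (le_of_lt hmq)
      calc (m : ℝ) * (1 - (Ω.card : ℝ) / m) * ((c - δ) * F)
          ≤ (m : ℝ) * (1 - (Ω.card : ℝ) / m) *
            ((1 / ((m : ℝ) * (1 - (Ω.card : ℝ) / m))) * ∑ i ∈ Ωᶜ, |measOp A D i|) := h
        _ = ∑ i ∈ Ωᶜ, |measOp A D i| := by
          rw [← mul_assoc, mul_one_div_cancel (ne_of_gt hmq), one_mul]
    have hpt : ∀ i, (measOp A (Ustar * Ustarᵀ) i + sstar i) - measOp A (U * Uᵀ) i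
        = sstar i - measOp A D i := by
      intro i
      rw [hDdef, measOp_sub']
      ring
    have hobjU : objF A (fun i => measOp A (Ustar * Ustarᵀ) i + sstar i) U
        = (1 / m) * ∑ i, |sstar i - measOp A D i| := by
      simp only [objF, l1Norm]
      congr 1
      exact Finset.sum_congr rfl fun i _ => by rw [hpt i]
    have hsplit : ∑ i, |sstar i - measOp A D i|
        = ∑ i ∈ Ω, |sstar i - measOp A D i| + ∑ i ∈ Ωᶜ, |measOp A D i| := by
      rw [← Finset.sum_add_sum_compl Ω fun i => |sstar i - measOp A D i|]
      congr 1
      exact Finset.sum_congr rfl fun i hi => by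
        rw [hsupp i (Finset.mem_compl.mp hi), zero_sub, abs_neg]
    have hΩbound : ∑ i ∈ Ω, |sstar i| - ∑ i ∈ Ω, |measOp A D i|
        ≤ ∑ i ∈ Ω, |sstar i - measOp A D i| := by
      rw [← Finset.sum_sub_distrib]
      exact Finset.sum_le_sum fun i _ => abs_sub_abs_le_abs_sub _ _
    have hΩg : ∑ i ∈ Ω, |measOp A D i|
        = l1Norm (measOp A D) - ∑ i ∈ Ωᶜ, |measOp A D i| := by
      simp only [l1Norm]
      rw [← Finset.sum_add_sum_compl Ω fun i => |measOp A D i|]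
      ring
    have hsstar : ∑ i ∈ Ω, |sstar i| = ∑ i, |sstar i| := by
      apply Finset.sum_subset (Finset.subset_univ Ω)
      intro i _ hi
      rw [hsupp i hi, abs_zero]
    have hbig : ∑ i, |sstar i| +
        (m : ℝ) * ((2 * (1 - (Ω.card : ℝ) / m) * (c - δ) - (c + δ)) * F)
        ≤ ∑ i, |sstar i - measOp A D i| := by
      rw [hsplit]
      nlinarith [hΩbound, hΩg, hsstar, hS, hT]
    have hmono := mul_le_mul_of_nonneg_left hbig (by positivity : (0:ℝ) ≤ 1 / m)
    have heq : (1 / (m:ℝ)) * (∑ i, |sstar i| +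
        (m : ℝ) * ((2 * (1 - (Ω.card : ℝ) / m) * (c - δ) - (c + δ)) * F))
        = (1 / m) * ∑ i, |sstar i| +
          (2 * (1 - (Ω.card : ℝ) / m) * (c - δ) - (c + δ)) * F := by
      field_simp
    rw [hfstar, hobjU]
    linarith [hmono, heq]
  have part1 : ∀ U : Matrix (Fin n) (Fin r) ℝ,
      (∀ U' : Matrix (Fin n) (Fin r) ℝ,
        objF A (fun i => measOp A (Ustar * Ustarᵀ) i + sstar i) U ≤
          objF A (fun i => measOp A (Ustar * Ustarᵀ) i + sstar i) U') →
      U * Uᵀ = Ustar * Ustarᵀ := by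
    intro U hU
    have h1 := key U
    have h2 := hU Ustar
    have h3 : (2 * (1 - (Ω.card : ℝ) / m) * (c - δ) - (c + δ)) *
        frobNorm (U * Uᵀ - Ustar * Ustarᵀ) ≤ 0 := by linarith
    have hnn := frobNorm_nonneg' (U * Uᵀ - Ustar * Ustarᵀ)
    have hF0 : frobNorm (U * Uᵀ - Ustar * Ustarᵀ) = 0 := by
      by_contra hne
      have hFpos : 0 < frobNorm (U * Uᵀ - Ustar * Ustarᵀ) := lt_of_le_of_ne hnn (Ne.symm hne)
      linarith [mul_pos hκ hFpos]
    exact sub_eq_zero.mp (frobNorm_eq_zero' _ hF0)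
  refine ⟨part1, ?_⟩
  ext U
  simp only [Set.mem_setOf_eq]
  constructor
  · intro hU
    exact factor_lemma Ustar U hrank (part1 U hU)
  · rintro ⟨R, hR, rfl⟩
    intro U'
    have hRR : R * Rᵀ = 1 := mul_eq_one_comm.mp hR
    have hUU : (Ustar * R) * (Ustar * R)ᵀ = Ustar * Ustarᵀ := by
      rw [Matrix.transpose_mul, Matrix.mul_assoc, ← Matrix.mul_assoc R Rᵀ Ustarᵀ, hRR,
        Matrix.one_mul]
    have hobj : objF A (fun i => measOp A (Ustar * Ustarᵀ) i + sstar i) (Ustar * R)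
        = objF A (fun i => measOp A (Ustar * Ustarᵀ) i + sstar i) Ustar := by
      simp only [objF, hUU]
    rw [hobj]
    have hk := key U'
    have hnn := frobNorm_nonneg' (U' * U'ᵀ - Ustar * Ustarᵀ)
    have := mul_nonneg (le_of_lt hκ) hnn
    linarith
end

section
/- Let 0 < δ and suppose (1/m)‖𝒜(X)‖₁ ≤ (√(2/π) + δ)‖X‖_F for every X ∈ ℝ^{n×n} of rank at most 2r (upper ℓ1/ℓ2-RIP bound). Then the function U ↦ f(U) + (√(2/π) + δ)·‖U‖_F² is convex on ℝ^{n×r}; that is, f is weakly convex with parameter τ = 2(√(2/π) + δ). -/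
open Matrix
open scoped BigOperators

lemma frobNorm_sq' {α β : Type*} [Fintype α] [Fintype β] (A : Matrix α β ℝ) :
    frobNorm A ^ 2 = ∑ i, ∑ j, (A i j) ^ 2 :=
  Real.sq_sqrt (Finset.sum_nonneg fun _ _ => Finset.sum_nonneg fun _ _ => sq_nonneg _)

lemma frob_mul_transpose_le' {n r : ℕ} (D : Matrix (Fin n) (Fin r) ℝ) :
    frobNorm (D * Dᵀ) ≤ frobNorm D ^ 2 := by
  have hnn : (0:ℝ) ≤ ∑ i, ∑ k, D i k ^ 2 :=
    Finset.sum_nonneg fun _ _ => Finset.sum_nonneg fun _ _ => sq_nonneg _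
  have h1 : frobNorm (D * Dᵀ) ≤ Real.sqrt ((∑ i, ∑ k, D i k ^ 2) ^ 2) := by
    apply Real.sqrt_le_sqrt
    calc ∑ i, ∑ j, ((D * Dᵀ) i j) ^ 2
        ≤ ∑ i, ∑ j, (∑ k, D i k ^ 2) * (∑ k, D j k ^ 2) := by
          refine Finset.sum_le_sum fun i _ => Finset.sum_le_sum fun j _ => ?_
          simpa [Matrix.mul_apply, Matrix.transpose_apply] using
            Finset.sum_mul_sq_le_sq_mul_sq Finset.univ (D i) (D j)
      _ = (∑ i, ∑ k, D i k ^ 2) ^ 2 := by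
          rw [sq, Finset.sum_mul_sum]
  calc frobNorm (D * Dᵀ) ≤ Real.sqrt ((∑ i, ∑ k, D i k ^ 2) ^ 2) := h1
    _ = ∑ i, ∑ k, D i k ^ 2 := Real.sqrt_sq hnn
    _ = frobNorm D ^ 2 := (frobNorm_sq' D).symm

/-- Proposition 3.4: under the upper ℓ1/ℓ2-RIP bound, the objective `f` is weakly convex
with parameter `τ = 2(√(2/π) + δ)`, i.e. `U ↦ f(U) + (√(2/π) + δ)‖U‖_F²` is convex. -/
theorem stmt8 {n r m : ℕ} (hm : 0 < m)
    (A : Fin m → Matrix (Fin n) (Fin n) ℝ)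
    (Xstar : Matrix (Fin n) (Fin n) ℝ) (hpsd : Xstar.PosSemidef) (hrank : Xstar.rank = r)
    (sstar : Fin m → ℝ)
    (δ : ℝ) (hδ : 0 < δ)
    (hRIPub : ∀ X : Matrix (Fin n) (Fin n) ℝ, X.rank ≤ 2 * r →
      (1 / m) * l1Norm (measOp A X) ≤ (Real.sqrt (2 / Real.pi) + δ) * frobNorm X) :
    ConvexOn ℝ Set.univ (fun U : Matrix (Fin n) (Fin r) ℝ =>
      objF A (fun i => measOp A Xstar i + sstar i) U +
        (Real.sqrt (2 / Real.pi) + δ) * (frobNorm U) ^ 2) := by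
  set c := Real.sqrt (2 / Real.pi) + δ with hcdef
  have hc : 0 ≤ c := add_nonneg (Real.sqrt_nonneg _) hδ.le
  refine ⟨convex_univ, ?_⟩
  intro U _ W _ a b ha hb hab
  set y : Fin m → ℝ := fun i => measOp A Xstar i + sstar i with hy
  set D : Matrix (Fin n) (Fin r) ℝ := U - W with hDdef
  set Z : Matrix (Fin n) (Fin r) ℝ := a • U + b • W with hZdef
  have hb' : b = 1 - a := by linarith
  -- entrywise identity for Z Zᵀ
  have key : ∀ p q : Fin n, (Z * Zᵀ) p q
      = a * (U * Uᵀ) p q + b * (W * Wᵀ) p q - (a * b) * ((D * Dᵀ) p q) := by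
    intro p q
    simp only [Matrix.mul_apply, Matrix.transpose_apply, hZdef, hDdef, Matrix.add_apply,
      Matrix.smul_apply, Matrix.sub_apply, smul_eq_mul, Finset.mul_sum,
      ← Finset.sum_sub_distrib, ← Finset.sum_add_distrib]
    refine Finset.sum_congr rfl fun k _ => ?_
    subst hb'; ring
  -- the measurement of Z Zᵀ decomposes
  have hmat : ∀ i, measOp A (Z * Zᵀ) i
      = a * measOp A (U * Uᵀ) i + b * measOp A (W * Wᵀ) i - (a * b) * measOp A (D * Dᵀ) i := by
    intro i
    simp only [measOp, key, mul_sub, mul_add, Finset.mul_sum,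
      ← Finset.sum_sub_distrib, ← Finset.sum_add_distrib]
    refine Finset.sum_congr rfl fun j _ => Finset.sum_congr rfl fun k _ => ?_
    ring
  -- ℓ1 bound
  have hl1 : l1Norm (fun i => y i - measOp A (Z * Zᵀ) i)
      ≤ a * l1Norm (fun i => y i - measOp A (U * Uᵀ) i)
        + b * l1Norm (fun i => y i - measOp A (W * Wᵀ) i)
        + (a * b) * l1Norm (measOp A (D * Dᵀ)) := by
    simp only [l1Norm, Finset.mul_sum, ← Finset.sum_add_distrib]
    refine Finset.sum_le_sum fun i _ => ?_
    rw [hmat i]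
    have hdec : y i - (a * measOp A (U * Uᵀ) i + b * measOp A (W * Wᵀ) i
          - (a * b) * measOp A (D * Dᵀ) i)
        = a * (y i - measOp A (U * Uᵀ) i) + b * (y i - measOp A (W * Wᵀ) i)
          + (a * b) * measOp A (D * Dᵀ) i := by
      linear_combination (-(y i)) * hab
    rw [hdec]
    calc |a * (y i - measOp A (U * Uᵀ) i) + b * (y i - measOp A (W * Wᵀ) i)
          + (a * b) * measOp A (D * Dᵀ) i|
        ≤ |a * (y i - measOp A (U * Uᵀ) i) + b * (y i - measOp A (W * Wᵀ) i)|
          + |(a * b) * measOp A (D * Dᵀ) i| := abs_add_le _ _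
      _ ≤ |a * (y i - measOp A (U * Uᵀ) i)| + |b * (y i - measOp A (W * Wᵀ) i)|
          + |(a * b) * measOp A (D * Dᵀ) i| := by
            have := abs_add_le (a * (y i - measOp A (U * Uᵀ) i)) (b * (y i - measOp A (W * Wᵀ) i))
            linarith
      _ = a * |y i - measOp A (U * Uᵀ) i| + b * |y i - measOp A (W * Wᵀ) i|
          + (a * b) * |measOp A (D * Dᵀ) i| := by
            rw [abs_mul, abs_mul, abs_mul, abs_of_nonneg ha, abs_of_nonneg hb,
              abs_of_nonneg (mul_nonneg ha hb)]
  -- Frobenius identity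
  have hfro : frobNorm Z ^ 2 = a * frobNorm U ^ 2 + b * frobNorm W ^ 2 - a * b * frobNorm D ^ 2 := by
    have e1 : ∀ p q, (Z p q) ^ 2 = a * (U p q) ^ 2 + b * (W p q) ^ 2 - a * b * (D p q) ^ 2 := by
      intro p q
      simp only [hZdef, hDdef, Matrix.add_apply, Matrix.smul_apply, Matrix.sub_apply, smul_eq_mul]
      subst hb'; ring
    simp only [frobNorm_sq', e1, Finset.sum_sub_distrib, Finset.sum_add_distrib, ← Finset.mul_sum]
  -- rank bound and RIP
  have hrk : (D * Dᵀ).rank ≤ 2 * r := by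
    have h1 : (D * Dᵀ).rank ≤ D.rank := Matrix.rank_mul_le_left D Dᵀ
    have h2 : D.rank ≤ r := by simpa using Matrix.rank_le_card_width D
    omega
  have hRIP := hRIPub (D * Dᵀ) hrk
  have hDD : c * frobNorm (D * Dᵀ) ≤ c * frobNorm D ^ 2 :=
    mul_le_mul_of_nonneg_left (frob_mul_transpose_le' D) hc
  have h2 : (1 / (m:ℝ)) * l1Norm (measOp A (D * Dᵀ)) ≤ c * frobNorm D ^ 2 :=
    le_trans hRIP hDD
  have h3 : (a * b) * ((1 / (m:ℝ)) * l1Norm (measOp A (D * Dᵀ)))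
      ≤ (a * b) * (c * frobNorm D ^ 2) :=
    mul_le_mul_of_nonneg_left h2 (mul_nonneg ha hb)
  have hm' : (0:ℝ) ≤ 1 / m := by positivity
  have h1 : (1 / (m:ℝ)) * l1Norm (fun i => y i - measOp A (Z * Zᵀ) i)
      ≤ a * ((1 / (m:ℝ)) * l1Norm (fun i => y i - measOp A (U * Uᵀ) i))
        + b * ((1 / (m:ℝ)) * l1Norm (fun i => y i - measOp A (W * Wᵀ) i))
        + (a * b) * ((1 / (m:ℝ)) * l1Norm (measOp A (D * Dᵀ))) := by
    calc (1 / (m:ℝ)) * l1Norm (fun i => y i - measOp A (Z * Zᵀ) i)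
        ≤ (1 / (m:ℝ)) * (a * l1Norm (fun i => y i - measOp A (U * Uᵀ) i)
            + b * l1Norm (fun i => y i - measOp A (W * Wᵀ) i)
            + (a * b) * l1Norm (measOp A (D * Dᵀ))) := mul_le_mul_of_nonneg_left hl1 hm'
      _ = _ := by ring
  have hC : c * frobNorm Z ^ 2
      = a * (c * frobNorm U ^ 2) + b * (c * frobNorm W ^ 2)
        - (a * b) * (c * frobNorm D ^ 2) := by rw [hfro]; ring
  simp only [objF, smul_eq_mul]
  beta_reduce
  clear_value c y D Z
  linarith [h1, h3, hC]
end
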